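/- arXiv:1006.5896 — 3 statements merged into one kernel-verified Lean document; each statement's English description precedes it below -/
import Mathlib

section
/- Soundness of abstraction: let φ and ψ be propositional formulas over a finite variable set V, and let W be any collection of subsets of V. If for every valuation ν with ν ⊨ φ and ν ⊭ ψ there exists S ∈ W such that ν[S↦0] ⊨ φ and ν x = true for some x ∈ S, then φ ⊨_min ψ. -/
variable {V : Type*} [Fintype V]

/-- Pointwise order on valuations: `ν' ≤ ν` iff every variable true in `ν'` is true in `ν`. -/
def VLE (ν' ν : V → Bool) : Prop := ∀ x, ν' x = true → ν x = true

/-- `ν` is a minimal model of `φ`: it is a model and no strictly smaller valuation is a model. -/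
def IsMinimalModel (φ : (V → Bool) → Prop) (ν : V → Bool) : Prop :=
  φ ν ∧ ¬ ∃ ν', VLE ν' ν ∧ ν' ≠ ν ∧ φ ν'

/-- `φ ⊨_min ψ`: every minimal model of `φ` satisfies `ψ`. -/
def EntailsMin (φ ψ : (V → Bool) → Prop) : Prop :=
  ∀ ν, IsMinimalModel φ ν → ψ ν

/-- `ν[S↦0]`: the valuation agreeing with `ν` outside `S` and assigning `false` on `S`. -/
noncomputable def setZero (ν : V → Bool) (S : Set V) : V → Bool :=
  fun x => @ite _ (x ∈ S) (Classical.propDecidable _) false (ν x)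

/-- `x` is free for negation in `φ`: every minimal model of `φ` assigns `false` to `x`. -/
def FreeForNegation (φ : (V → Bool) → Prop) (x : V) : Prop :=
  ∀ ν, IsMinimalModel φ ν → ν x = false

section

omit [Fintype V]

theorem setZero_vle (ν : V → Bool) (S : Set V) : VLE (setZero ν S) ν := by
  intro x hx
  by_cases hxS : x ∈ S <;> simp_all [setZero]

theorem setZero_ne_self {ν : V → Bool} {S : Set V} {x : V} (hxS : x ∈ S) (hx : ν x = true) :
    setZero ν S ≠ ν := fun h => by
  simpa [setZero, hxS, hx] using congrFun h x

theorem IsMinimalModel.eq_of_vle {φ : (V → Bool) → Prop} {ν ν' : V → Bool}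
    (hν : IsMinimalModel φ ν) (hle : VLE ν' ν) (hφ : φ ν') : ν' = ν := by
  by_contra hne
  exact hν.2 ⟨ν', hle, hne, hφ⟩

end

theorem stmt_3 (φ ψ : (V → Bool) → Prop) (W : Set (Set V))
    (h : ∀ ν : V → Bool, φ ν → ¬ ψ ν →
      ∃ S ∈ W, φ (setZero ν S) ∧ ∃ x ∈ S, ν x = true) :
    EntailsMin φ ψ := by
  intro ν hν
  by_contra hψ
  obtain ⟨S, -, hφS, x, hxS, hx⟩ := h ν hν.1 hψ
  exact setZero_ne_self hxS hx (hν.eq_of_vle (setZero_vle ν S) hφS)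
end

section
/- Let φ and ψ be propositional formulas over a finite variable set V such that φ ⊨_min ψ. Then the formula φ ∧ ψ (whose models are exactly the valuations satisfying both φ and ψ) has the same set of minimal models as φ. -/
variable {V : Type*} [Fintype V]

theorem minimal_and_iff_minimal_of_forall_minimal {α : Type*} [Preorder α] [WellFoundedLT α]
    {P Q : α → Prop} (hQ : ∀ y, Minimal P y → Q y) {x : α} :
    Minimal (fun y => P y ∧ Q y) x ↔ Minimal P x := by
  refine ⟨fun hx => ⟨hx.prop.1, fun y hy hyx => ?_⟩,
    fun hx => hx.mono (fun _ h => h.1) ⟨hx.prop, hQ x hx⟩⟩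
  -- a minimal model of `P` below `y` also satisfies `Q`, so it cannot lie strictly below `x`
  obtain ⟨z, hzy, hz⟩ := exists_minimal_le_of_wellFoundedLT P y hy
  exact (hx.le_of_le ⟨hz.prop, hQ z hz⟩ (hzy.trans hyx)).trans hzy

omit [Fintype V] in
theorem vle_iff_le {ν' ν : V → Bool} : VLE ν' ν ↔ ν' ≤ ν := by
  simp only [VLE, Pi.le_def, Bool.le_iff_imp]

omit [Fintype V] in
theorem isMinimalModel_iff_minimal {φ : (V → Bool) → Prop} {ν : V → Bool} :
    IsMinimalModel φ ν ↔ Minimal φ ν := by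
  simp only [IsMinimalModel, minimal_iff_forall_lt, lt_iff_le_and_ne, vle_iff_le, not_exists,
    not_and, and_imp]

theorem stmt_8 (φ ψ : (V → Bool) → Prop) (h : EntailsMin φ ψ) :
    ∀ ν : V → Bool,
      IsMinimalModel (fun ν => φ ν ∧ ψ ν) ν ↔ IsMinimalModel φ ν := by
  intro ν
  simp only [isMinimalModel_iff_minimal]
  -- `V → Bool` is finite, so its pointwise order is well-founded
  exact minimal_and_iff_minimal_of_forall_minimal
    fun μ hμ => h μ (isMinimalModel_iff_minimal.mpr hμ)
end

section
/- Progress of CEGAR refinement: let φ and ψ be propositional formulas over a finite variable set V, and let W be a collection of subsets of V. Suppose ν is a valuation with ν ⊨ φ and ν ⊭ ψ such that for every S ∈ W it is not the case that both ν[S↦0] ⊨ φ and ν x = true for some x ∈ S. If ν' is a model of φ with ν' ≤ ν and ν' ≠ ν, then the set S₀ := { x ∈ V | ν x = true and ν' x = false } satisfies ν[S₀↦0] = ν', S₀ is nonempty with ν x = true for every x ∈ S₀, and S₀ ∉ W. -/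
variable {V : Type*} [Fintype V]

theorem setZero_empty {α : Type*} (ν : α → Bool) : setZero ν ∅ = ν := by
  funext x
  simp [setZero]

theorem VLE.setZero_eq {α : Type*} {ν ν' : α → Bool} (hle : VLE ν' ν) :
    setZero ν {x | ν x = true ∧ ν' x = false} = ν' := by
  funext x
  have hx := hle x
  unfold setZero
  cases h : ν x <;> cases h' : ν' x <;> simp_all

theorem VLE.nonempty_of_ne {α : Type*} {ν ν' : α → Bool} (hle : VLE ν' ν) (hne : ν' ≠ ν) :
    {x | ν x = true ∧ ν' x = false}.Nonempty := by
  rw [Set.nonempty_iff_ne_empty]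
  intro hempty
  apply hne
  rw [← hle.setZero_eq, hempty, setZero_empty]

theorem stmt_11_general (φ : (V → Bool) → Prop) (W : Set (Set V)) (ν ν' : V → Bool)
    (hW : ∀ S ∈ W, ¬ (φ (setZero ν S) ∧ ∃ x ∈ S, ν x = true))
    (hν' : φ ν') (hle : VLE ν' ν) (hne : ν' ≠ ν) :
    setZero ν {x : V | ν x = true ∧ ν' x = false} = ν' ∧
    ({x : V | ν x = true ∧ ν' x = false}).Nonempty ∧
    (∀ x ∈ {x : V | ν x = true ∧ ν' x = false}, ν x = true) ∧
    {x : V | ν x = true ∧ ν' x = false} ∉ W := by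
  have heq := hle.setZero_eq
  have hS := hle.nonempty_of_ne hne
  refine ⟨heq, hS, fun x hx => hx.1, fun hmem => ?_⟩
  obtain ⟨x, hx⟩ := hS
  exact hW _ hmem ⟨heq.symm ▸ hν', x, hx, hx.1⟩

theorem stmt_11 (φ ψ : (V → Bool) → Prop) (W : Set (Set V)) (ν ν' : V → Bool)
    (hν : φ ν) (hψ : ¬ ψ ν)
    (hW : ∀ S ∈ W, ¬ (φ (setZero ν S) ∧ ∃ x ∈ S, ν x = true))
    (hν' : φ ν') (hle : VLE ν' ν) (hne : ν' ≠ ν) :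
    setZero ν {x : V | ν x = true ∧ ν' x = false} = ν' ∧
    ({x : V | ν x = true ∧ ν' x = false}).Nonempty ∧
    (∀ x ∈ {x : V | ν x = true ∧ ν' x = false}, ν x = true) ∧
    {x : V | ν x = true ∧ ν' x = false} ∉ W :=
  stmt_11_general φ W ν ν' hW hν' hle hne
end
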